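/- The perspective function h(a,b) defined as |a|^p / b^{p-1} for b > 0, 0 for a = b = 0, and +∞ otherwise, is convex on ℝ × ℝ for every p ≥ 1. -/

import Mathlib

open scoped ENNReal

/-- The perspective function `h(a,b) = |a|^p / b^(p-1)` for `b > 0`, `0` at `(0,0)`,
and `+∞` otherwise. -/
noncomputable def perspective (p : ℝ) (a b : ℝ) : ℝ≥0∞ :=
  if 0 < b then ENNReal.ofReal (|a| ^ p / b ^ (p - 1))
  else if a = 0 ∧ b = 0 then 0 else ⊤

/-!
For `b > 0`, `perspective p a b = b f(a / b)` is the perspective of the convex function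
`f = |·| ^ p`. Being positively homogeneous of degree one, it is convex as soon
as it is subadditive, and subadditivity for `b₁, b₂ > 0` is convexity of `f` at the point
`(a₁ + a₂) / (b₁ + b₂)`, the convex combination of `a₁ / b₁` and `a₂ / b₂` with weights
`b₁ / (b₁ + b₂)` and `b₂ / (b₁ + b₂)`.
-/

theorem convexOn_norm_rpow {E : Type*} [SeminormedAddCommGroup E] [NormedSpace ℝ E] {p : ℝ}
    (hp : 1 ≤ p) : ConvexOn ℝ Set.univ fun x : E ↦ ‖x‖ ^ p := by
  refine ⟨convex_univ, fun x _ y _ a b ha hb hab ↦ ?_⟩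
  have hnorm : ‖a • x + b • y‖ ≤ a * ‖x‖ + b * ‖y‖ := by
    simpa [norm_smul, abs_of_nonneg ha, abs_of_nonneg hb] using norm_add_le (a • x) (b • y)
  calc ‖a • x + b • y‖ ^ p ≤ (a * ‖x‖ + b * ‖y‖) ^ p :=
        Real.rpow_le_rpow (norm_nonneg _) hnorm (by linarith)
    _ ≤ a * ‖x‖ ^ p + b * ‖y‖ ^ p :=
        (convexOn_rpow hp).2 (norm_nonneg x) (norm_nonneg y) ha hb hab

theorem ConvexOn.perspective_add_le {E : Type*} [AddCommGroup E] [Module ℝ E] {s : Set E}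
    {f : E → ℝ} (hf : ConvexOn ℝ s f) {a₁ a₂ : E} {b₁ b₂ : ℝ} (hb₁ : 0 < b₁) (hb₂ : 0 < b₂)
    (h₁ : b₁⁻¹ • a₁ ∈ s) (h₂ : b₂⁻¹ • a₂ ∈ s) :
    (b₁ + b₂) * f ((b₁ + b₂)⁻¹ • (a₁ + a₂)) ≤ b₁ * f (b₁⁻¹ • a₁) + b₂ * f (b₂⁻¹ • a₂) := by
  have hb : 0 < b₁ + b₂ := add_pos hb₁ hb₂
  have hpoint : (b₁ / (b₁ + b₂)) • b₁⁻¹ • a₁ + (b₂ / (b₁ + b₂)) • b₂⁻¹ • a₂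
      = (b₁ + b₂)⁻¹ • (a₁ + a₂) := by
    rw [smul_smul, smul_smul, smul_add]
    congr 2 <;> field_simp
  have key := hf.2 h₁ h₂ (div_nonneg hb₁.le hb.le) (div_nonneg hb₂.le hb.le)
    (by rw [← add_div, div_self hb.ne'])
  rw [hpoint, smul_eq_mul, smul_eq_mul] at key
  calc (b₁ + b₂) * f ((b₁ + b₂)⁻¹ • (a₁ + a₂))
      ≤ (b₁ + b₂) * (b₁ / (b₁ + b₂) * f (b₁⁻¹ • a₁) + b₂ / (b₁ + b₂) * f (b₂⁻¹ • a₂)) :=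
        mul_le_mul_of_nonneg_left key hb.le
    _ = b₁ * f (b₁⁻¹ • a₁) + b₂ * f (b₂⁻¹ • a₂) := by field_simp

section

variable {p a b : ℝ}

theorem perspective_of_pos (hb : 0 < b) :
    perspective p a b = ENNReal.ofReal (b * |b⁻¹ * a| ^ p) := by
  rw [perspective, if_pos hb, abs_mul, abs_inv, abs_of_pos hb,
    Real.mul_rpow (inv_nonneg.2 hb.le) (abs_nonneg a), Real.inv_rpow hb.le,
    Real.rpow_sub hb, Real.rpow_one]
  congr 1
  field_simp

theorem perspective_zero_zero : perspective p 0 0 = 0 := by simp [perspective]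

theorem pos_or_eq_zero_of_perspective_ne_top (h : perspective p a b ≠ ⊤) :
    0 < b ∨ (a = 0 ∧ b = 0) := by
  unfold perspective at h
  split_ifs at h with hb hab
  exacts [Or.inl hb, Or.inr hab, absurd rfl h]

theorem perspective_mul_mul {t : ℝ} (ht : 0 ≤ t) (a b : ℝ) :
    perspective p (t * a) (t * b) = ENNReal.ofReal t * perspective p a b := by
  rcases ht.eq_or_lt with rfl | ht_pos
  · simp [perspective_zero_zero]
  rcases lt_or_ge 0 b with hb | hb
  · rw [perspective_of_pos (mul_pos ht_pos hb), perspective_of_pos hb,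
      ← ENNReal.ofReal_mul ht_pos.le, mul_inv, mul_mul_mul_comm, inv_mul_cancel₀ ht_pos.ne',
      one_mul, mul_assoc]
  · have htb : ¬ 0 < t * b := not_lt.2 (mul_nonpos_of_nonneg_of_nonpos ht hb)
    simp [perspective, hb.not_gt, htb, ht_pos.ne',
      ENNReal.mul_top (ENNReal.ofReal_pos.2 ht_pos).ne']

theorem perspective_add_add_le (hp : 1 ≤ p) (a₁ b₁ a₂ b₂ : ℝ) :
    perspective p (a₁ + a₂) (b₁ + b₂) ≤ perspective p a₁ b₁ + perspective p a₂ b₂ := by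
  by_cases h₁ : perspective p a₁ b₁ = ⊤
  · simp [h₁]
  by_cases h₂ : perspective p a₂ b₂ = ⊤
  · simp [h₂]
  rcases pos_or_eq_zero_of_perspective_ne_top h₁ with hb₁ | ⟨rfl, rfl⟩
  · rcases pos_or_eq_zero_of_perspective_ne_top h₂ with hb₂ | ⟨rfl, rfl⟩
    · rw [perspective_of_pos (add_pos hb₁ hb₂), perspective_of_pos hb₁, perspective_of_pos hb₂,
        ← ENNReal.ofReal_add (by positivity) (by positivity)]
      refine ENNReal.ofReal_le_ofReal ?_
      simpa only [Real.norm_eq_abs, smul_eq_mul] using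
        (convexOn_norm_rpow (E := ℝ) hp).perspective_add_le hb₁ hb₂ trivial trivial
    · simp [perspective_zero_zero]
  · simp [perspective_zero_zero]

end

/-- The perspective function is convex on `ℝ × ℝ` for every `p ≥ 1`. -/
theorem perspective_convex (p : ℝ) (hp : 1 ≤ p) :
    ∀ (a₁ b₁ a₂ b₂ t : ℝ), 0 ≤ t → t ≤ 1 →
      perspective p (t * a₁ + (1 - t) * a₂) (t * b₁ + (1 - t) * b₂)
        ≤ ENNReal.ofReal t * perspective p a₁ b₁
          + ENNReal.ofReal (1 - t) * perspective p a₂ b₂ := by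
  intro a₁ b₁ a₂ b₂ t ht₀ ht₁
  rw [← perspective_mul_mul ht₀, ← perspective_mul_mul (sub_nonneg.2 ht₁)]
  exact perspective_add_add_le hp _ _ _ _
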